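/- arXiv:2111.11073 — 6 statements merged into one kernel-verified Lean document; each statement's English description precedes it below -/
import Mathlib

section
/- (Proposition 1.) Let A be a real n × p matrix, A' a real p × n matrix, B a real q × n matrix, and B' a real n × q matrix. Define the fully lifted and projected operator L̂ := (1/2)·(V_n · A · V_pᵀ)⁻ · V_p · A' · V_nᵀ + (1/2)·(V_n · B' · V_qᵀ)⁻ · V_q · B · V_nᵀ, a 2n × 2n matrix. Then (1/2) · V_nᵀ · L̂ · V_n = A·A' + B'·B. In particular, taking A = N_{k−1}, A' = N_{k−1}*, B = N_k, B' = N_k*, the compression of the fully lifted projected Hodge Laplacian equals the Hodge Laplacian L_k = N_{k−1}N_{k−1}* + N_k* N_k. -/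
open Matrix

/-- Entrywise negative part of a real matrix: `(X⁻)_{ij} = (X_{ij} − |X_{ij}|)/2`. -/
noncomputable def negPart {m n : Type*} (X : Matrix m n ℝ) : Matrix m n ℝ :=
  fun i j => (X i j - |X i j|) / 2

/-- The lift matrix `V_n`: the identity `I_n` stacked on top of `−I_n`. -/
def liftMat (n : ℕ) : Matrix (Fin n ⊕ Fin n) (Fin n) ℝ :=
  Matrix.fromRows 1 (-1)

/-!
Writing `V_n X V_mᵀ = [[X, -X], [-X, X]]`, its negative part is `[[X⁻, (-X)⁻], [(-X)⁻, X⁻]]`,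
and since `X⁻ - (-X)⁻ = X` this block matrix still maps `V_m` to `V_n X`. Hence each lifted
and projected product `(V_n X V_mᵀ)⁻ · V_m Y V_nᵀ` equals the lift `V_n (X Y) V_nᵀ`, and
compressing with `V_nᵀ V_n = 2` gives `4 X Y`, which the three factors `1/2` reduce to `X Y`.
-/

theorem negPart_sub_negPart_neg {m n : Type*} (X : Matrix m n ℝ) :
    negPart X - negPart (-X) = X := by
  ext i j
  change (X i j - |X i j|) / 2 - (-X i j - |-X i j|) / 2 = X i j
  rw [abs_neg]
  ring

theorem negPart_fromBlocks {l m n o : Type*} (A : Matrix n l ℝ) (B : Matrix n m ℝ)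
    (C : Matrix o l ℝ) (D : Matrix o m ℝ) :
    negPart (fromBlocks A B C D) =
      fromBlocks (negPart A) (negPart B) (negPart C) (negPart D) := by
  ext (i | i) (j | j) <;> rfl

theorem transpose_liftMat_mul_liftMat (n : ℕ) : (liftMat n)ᵀ * liftMat n = (2 : ℝ) • 1 := by
  rw [liftMat, transpose_fromRows, fromCols_mul_fromRows]
  simp only [transpose_one, transpose_neg, Matrix.one_mul, Matrix.neg_mul, neg_neg]
  module

theorem liftMat_mul_mul_transpose_liftMat {n m : ℕ} (X : Matrix (Fin n) (Fin m) ℝ) :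
    liftMat n * X * (liftMat m)ᵀ = fromBlocks X (-X) (-X) X := by
  rw [liftMat, liftMat, transpose_fromRows, fromRows_mul, fromRows_mul, mul_fromCols,
    mul_fromCols, ← fromRows_fromCols_eq_fromBlocks]
  simp only [Matrix.one_mul, Matrix.neg_mul, transpose_one, transpose_neg, Matrix.mul_one,
    Matrix.mul_neg, neg_neg]

theorem negPart_lift_mul_liftMat {n m : ℕ} (X : Matrix (Fin n) (Fin m) ℝ) :
    negPart (liftMat n * X * (liftMat m)ᵀ) * liftMat m = liftMat n * X := by
  rw [liftMat_mul_mul_transpose_liftMat, negPart_fromBlocks, liftMat, liftMat,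
    fromBlocks_mul_fromRows, fromRows_mul]
  simp only [Matrix.mul_one, Matrix.mul_neg, Matrix.one_mul, Matrix.neg_mul, ← sub_eq_add_neg,
    ← neg_sub (negPart X), negPart_sub_negPart_neg]

theorem negPart_lift_mul_lift {n m : ℕ} (X : Matrix (Fin n) (Fin m) ℝ)
    (Y : Matrix (Fin m) (Fin n) ℝ) :
    negPart (liftMat n * X * (liftMat m)ᵀ) * (liftMat m * Y * (liftMat n)ᵀ) =
      liftMat n * (X * Y) * (liftMat n)ᵀ := by
  rw [← Matrix.mul_assoc, ← Matrix.mul_assoc, negPart_lift_mul_liftMat, Matrix.mul_assoc _ X]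

theorem transpose_liftMat_mul_lift_mul_liftMat {n : ℕ} (Z : Matrix (Fin n) (Fin n) ℝ) :
    (liftMat n)ᵀ * (liftMat n * Z * (liftMat n)ᵀ) * liftMat n = (4 : ℝ) • Z := by
  calc (liftMat n)ᵀ * (liftMat n * Z * (liftMat n)ᵀ) * liftMat n
      = ((liftMat n)ᵀ * liftMat n) * Z * ((liftMat n)ᵀ * liftMat n) := by
        simp only [Matrix.mul_assoc]
    _ = (4 : ℝ) • Z := by
        rw [transpose_liftMat_mul_liftMat, Matrix.smul_mul, Matrix.mul_smul, Matrix.one_mul,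
          Matrix.mul_one, smul_smul]
        norm_num

/-- Proposition 1: the compression `(1/2)·Vₙᵀ · L̂ · Vₙ` of the fully lifted and projected
Hodge Laplacian equals the Hodge Laplacian `A·A' + B'·B`. -/
theorem compression_of_lifted_laplacian (n p q : ℕ)
    (A : Matrix (Fin n) (Fin p) ℝ) (A' : Matrix (Fin p) (Fin n) ℝ)
    (B : Matrix (Fin q) (Fin n) ℝ) (B' : Matrix (Fin n) (Fin q) ℝ) :
    (1 / 2 : ℝ) • ((liftMat n)ᵀ *
        ((1 / 2 : ℝ) • (negPart (liftMat n * A * (liftMat p)ᵀ) *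
            (liftMat p * A' * (liftMat n)ᵀ)) +
         (1 / 2 : ℝ) • (negPart (liftMat n * B' * (liftMat q)ᵀ) *
            (liftMat q * B * (liftMat n)ᵀ))) *
        liftMat n) = A * A' + B' * B := by
  rw [negPart_lift_mul_lift, negPart_lift_mul_lift, Matrix.mul_add, Matrix.add_mul,
    Matrix.mul_smul, Matrix.mul_smul, Matrix.smul_mul, Matrix.smul_mul,
    transpose_liftMat_mul_lift_mul_liftMat, transpose_liftMat_mul_lift_mul_liftMat]
  module
end

section
/- (Hodge decomposition.) Let A be a real n × p matrix and B a real q × n matrix with B·A = 0. In the Euclidean space ℝⁿ, let G be the range of the linear map x ↦ A·x (the gradient space), let C be the range of x ↦ Bᵀ·x (the curl space), and let H be the kernel of the linear map x ↦ (A·Aᵀ + Bᵀ·B)·x (the harmonic space). Then G, C and H are pairwise orthogonal subspaces and their sum is all of ℝⁿ: ℝⁿ = G ⊕ H ⊕ C as an internal orthogonal direct sum. -/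
/-!
Write `a`, `b` for the maps of `A`, `B` and `L = a aᵀ + bᵀ b`. Since `⟪L x, x⟫ = ‖aᵀ x‖² + ‖b x‖²`,
the harmonic space is `ker aᵀ ⊓ ker b = (range a)ᗮ ⊓ (range bᵀ)ᗮ`, which gives both orthogonality
relations involving it, and `range a ⟂ range bᵀ` is `b a = 0`. The orthogonal complement of
`G ⊔ H ⊔ C` is then `H ⊓ Hᗮ = ⊥`.
-/

open Matrix

namespace LinearMap

variable {𝕜 E F K : Type*} [RCLike 𝕜]
  [NormedAddCommGroup E] [InnerProductSpace 𝕜 E] [FiniteDimensional 𝕜 E]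
  [NormedAddCommGroup F] [InnerProductSpace 𝕜 F]
  [NormedAddCommGroup K] [InnerProductSpace 𝕜 K] [FiniteDimensional 𝕜 K]

theorem range_isOrtho_range_adjoint {T : F →ₗ[𝕜] E} {S : E →ₗ[𝕜] K} (hST : S ∘ₗ T = 0) :
    range T ⟂ range S.adjoint := by
  rw [← orthogonal_ker]
  exact (Submodule.isOrtho_orthogonal_right _).mono_left (range_le_ker_iff.mpr hST)

variable [FiniteDimensional 𝕜 F]

noncomputable def hodgeLaplacian (T : F →ₗ[𝕜] E) (S : E →ₗ[𝕜] K) : E →ₗ[𝕜] E :=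
  T ∘ₗ T.adjoint + S.adjoint ∘ₗ S

theorem ker_hodgeLaplacian (T : F →ₗ[𝕜] E) (S : E →ₗ[𝕜] K) :
    ker (hodgeLaplacian T S) = ker T.adjoint ⊓ ker S := by
  refine le_antisymm (fun x hx => ?_) fun x hx => ?_
  · have hsum : ‖T.adjoint x‖ ^ 2 + ‖S x‖ ^ 2 = 0 := by
      have := congrArg (fun y => RCLike.re (inner 𝕜 y x)) (mem_ker.mp hx)
      rw [hodgeLaplacian, add_apply, inner_add_left, comp_apply, comp_apply,
        ← adjoint_inner_right T, adjoint_inner_left S, map_add, inner_zero_left,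
        map_zero] at this
      simpa only [inner_self_eq_norm_sq] using this
    obtain ⟨hT, hS⟩ := (add_eq_zero_iff_of_nonneg (sq_nonneg _) (sq_nonneg _)).mp hsum
    exact ⟨by simpa using hT, by simpa using hS⟩
  · simp_all [hodgeLaplacian]

theorem range_isOrtho_ker_hodgeLaplacian (T : F →ₗ[𝕜] E) (S : E →ₗ[𝕜] K) :
    range T ⟂ ker (hodgeLaplacian T S) := by
  rw [Submodule.isOrtho_comm, Submodule.isOrtho_iff_le, orthogonal_range, ker_hodgeLaplacian]
  exact inf_le_left

theorem range_adjoint_isOrtho_ker_hodgeLaplacian (T : F →ₗ[𝕜] E) (S : E →ₗ[𝕜] K) :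
    range S.adjoint ⟂ ker (hodgeLaplacian T S) := by
  rw [Submodule.isOrtho_comm, Submodule.isOrtho_iff_le, orthogonal_range, adjoint_adjoint,
    ker_hodgeLaplacian]
  exact inf_le_right

theorem range_sup_ker_hodgeLaplacian_sup_range_adjoint_eq_top (T : F →ₗ[𝕜] E) (S : E →ₗ[𝕜] K) :
    range T ⊔ ker (hodgeLaplacian T S) ⊔ range S.adjoint = ⊤ := by
  rw [← Submodule.orthogonal_eq_bot_iff, ← Submodule.inf_orthogonal, ← Submodule.inf_orthogonal,
    orthogonal_range, orthogonal_range, adjoint_adjoint, inf_right_comm, ← ker_hodgeLaplacian]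
  exact Submodule.inf_orthogonal_eq_bot _

end LinearMap

namespace Matrix

variable {𝕜 m n : Type*} [RCLike 𝕜] [Fintype n] [DecidableEq n]

theorem mem_range_toEuclideanLin {A : Matrix m n 𝕜} {x : EuclideanSpace 𝕜 m} :
    x ∈ LinearMap.range (toEuclideanLin A) ↔ ∃ y : n → 𝕜, A *ᵥ y = x :=
  ⟨fun ⟨y, hy⟩ => ⟨y, by rw [← hy]; rfl⟩, fun ⟨y, hy⟩ => ⟨WithLp.toLp 2 y, by simp [hy]⟩⟩

theorem mem_ker_toEuclideanLin {A : Matrix m n 𝕜} {x : EuclideanSpace 𝕜 n} :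
    x ∈ LinearMap.ker (toEuclideanLin A) ↔ A *ᵥ x = 0 := by
  rw [LinearMap.mem_ker, ← (WithLp.ofLp_injective 2).eq_iff, ofLp_toLpLin]; rfl

theorem hodgeLaplacian_toEuclideanLin {l : Type*} [Fintype m] [DecidableEq m] [Fintype l]
    [DecidableEq l] (A : Matrix n l 𝕜) (B : Matrix m n 𝕜) :
    LinearMap.hodgeLaplacian (toEuclideanLin A) (toEuclideanLin B) =
      toEuclideanLin (A * Aᴴ + Bᴴ * B) := by
  rw [LinearMap.hodgeLaplacian, ← toEuclideanLin_conjTranspose_eq_adjoint,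
    ← toEuclideanLin_conjTranspose_eq_adjoint, map_add, toLpLin_mul_same, toLpLin_mul_same]

end Matrix

open LinearMap in
/-- Hodge decomposition: the gradient space `G`, harmonic space `H` and curl space `C`
are pairwise orthogonal and span all of Euclidean `ℝⁿ`. -/
theorem hodge_decomposition (n p q : ℕ)
    (A : Matrix (Fin n) (Fin p) ℝ) (B : Matrix (Fin q) (Fin n) ℝ)
    (hBA : B * A = 0)
    (G C H : Submodule ℝ (EuclideanSpace ℝ (Fin n)))
    (hG : ∀ x : EuclideanSpace ℝ (Fin n), x ∈ G ↔ ∃ y : Fin p → ℝ, A *ᵥ y = x)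
    (hC : ∀ x : EuclideanSpace ℝ (Fin n), x ∈ C ↔ ∃ z : Fin q → ℝ, Bᵀ *ᵥ z = x)
    (hH : ∀ x : EuclideanSpace ℝ (Fin n), x ∈ H ↔ (A * Aᵀ + Bᵀ * B) *ᵥ x = 0) :
    G ⟂ C ∧ G ⟂ H ∧ C ⟂ H ∧ G ⊔ H ⊔ C = ⊤ := by
  set a := toEuclideanLin A
  set b := toEuclideanLin B
  have hG' : G = range a := Submodule.ext fun x => (hG x).trans mem_range_toEuclideanLin.symm
  have hC' : C = range b.adjoint := by
    rw [← toEuclideanLin_conjTranspose_eq_adjoint, conjTranspose_eq_transpose_of_trivial]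
    exact Submodule.ext fun x => (hC x).trans mem_range_toEuclideanLin.symm
  have hH' : H = ker (hodgeLaplacian a b) := by
    rw [hodgeLaplacian_toEuclideanLin, conjTranspose_eq_transpose_of_trivial,
      conjTranspose_eq_transpose_of_trivial]
    exact Submodule.ext fun x => (hH x).trans mem_ker_toEuclideanLin.symm
  have hba : b ∘ₗ a = 0 := by rw [← toLpLin_mul_same, hBA, map_zero]
  subst hG' hC' hH'
  exact ⟨range_isOrtho_range_adjoint hba, range_isOrtho_ker_hodgeLaplacian a b,
    range_adjoint_isOrtho_ker_hodgeLaplacian a b,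
    range_sup_ker_hodgeLaplacian_sup_range_adjoint_eq_top a b⟩
end

section
/- (Gradient flow formulation.) Let w₋ : Fin p → ℝ, w : Fin n → ℝ and w₊ : Fin q → ℝ be positive weight functions, let B₋ be a real n × p matrix and B₊ a real q × n matrix. Set M := diag(w₋) · B₋ᵀ · diag(w)⁻¹ (a p × n matrix, playing the role of N_{k−1}*) and P := diag(w) · B₊ᵀ · diag(w₊)⁻¹ (an n × q matrix, playing the role of N_k*). Define F : ℝⁿ → ℝ by F(θ) = ∑_i (1/w₋_i) · cos((M·θ)_i) + ∑_j (1/w₊_j) · cos((B₊·θ)_j). Then F is differentiable at every θ, and its differential is the linear map v ↦ −∑_{l} v_l · (1/w_l) · ( B₋ · sin(M·θ) + P · sin(B₊·θ) )_l. Equivalently, the weighted simplicial Kuramoto vector field −B₋ sin(M θ) − P sin(B₊ θ) equals diag(w) times the Euclidean gradient of F, so the weighted simplicial Kuramoto model is the gradient flow of the simplicial order parameter. -/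
/-!
Each sum in `F` has the form `θ ↦ ∑ᵢ cᵢ cos((A θ)ᵢ)`, whose differential is
`v ↦ -(c ⊙ sin(A θ))ᵀ A v` by the chain rule. With `c = 1/w₋`, `A = M` and `c = 1/w₊`, `A = B₊`
the row vectors `(c ⊙ sin(A θ))ᵀ A` become `(1/w) ⊙ B₋ sin(M θ)` and `(1/w) ⊙ P sin(B₊ θ)`,
because `M` and `P` are the adjoints of `B₋` and `B₊` for the inner products weighted by the
reciprocal weights.
-/

open Matrix

section Weighted

variable {K : Type*} [Field K] {m n : Type*} [Fintype m] [Fintype n] [DecidableEq m]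
  [DecidableEq n]

theorem Matrix.inv_diagonal_of_ne_zero {d : n → K} (hd : ∀ i, d i ≠ 0) :
    (diagonal d)⁻¹ = diagonal d⁻¹ :=
  inv_eq_right_inv <| by
    rw [diagonal_mul_diagonal, ← diagonal_one]
    exact congrArg diagonal (funext fun i => mul_inv_cancel₀ (hd i))

/- `diagonal a * Bᵀ * (diagonal b)⁻¹` is the adjoint of `B` for `⟨x, x'⟩ = ∑ xᵢ x'ᵢ / aᵢ` and
`⟨y, y'⟩ = ∑ yₗ y'ₗ / bₗ`; the next two lemmas are the two adjunction identities. -/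
variable {a : m → K} {b : n → K} (B : Matrix n m K)

theorem vecMul_weightedAdjoint (ha : ∀ i, a i ≠ 0) (hb : ∀ l, b l ≠ 0) (x : m → K) :
    (fun i => 1 / a i * x i) ᵥ* (diagonal a * Bᵀ * (diagonal b)⁻¹) =
      fun l => 1 / b l * (B *ᵥ x) l := by
  have hx : (fun i => 1 / a i * x i) ᵥ* diagonal a = x :=
    funext fun i => by rw [vecMul_diagonal]; field_simp [ha i]
  rw [inv_diagonal_of_ne_zero hb, ← vecMul_vecMul, ← vecMul_vecMul, hx, vecMul_transpose]
  ext l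
  rw [vecMul_diagonal, Pi.inv_apply, mul_comm, one_div]

theorem weightedAdjoint_mulVec (ha : ∀ i, a i ≠ 0) (hb : ∀ l, b l ≠ 0) (y : n → K) :
    (fun l => 1 / b l * y l) ᵥ* B =
      fun i => 1 / a i * ((diagonal a * Bᵀ * (diagonal b)⁻¹) *ᵥ y) i := by
  have hy : diagonal b⁻¹ *ᵥ y = fun l => 1 / b l * y l :=
    funext fun l => by rw [mulVec_diagonal, Pi.inv_apply, one_div]
  rw [inv_diagonal_of_ne_zero hb, ← mulVec_mulVec, ← mulVec_mulVec, hy, mulVec_transpose]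
  ext i
  rw [mulVec_diagonal, one_div (a i), inv_mul_cancel_left₀ (ha i)]

end Weighted

variable {m n : Type*} [Fintype m] [Fintype n]

theorem hasFDerivAt_sum_mul_cos_mulVec (c : m → ℝ) (A : Matrix m n ℝ) (θ : n → ℝ) :
    HasFDerivAt (fun θ => ∑ i, c i * Real.cos ((A *ᵥ θ) i))
      (-∑ i, (c i * Real.sin ((A *ᵥ θ) i)) •
        (ContinuousLinearMap.proj i).comp A.mulVecLin.toContinuousLinearMap) θ := by
  rw [← Finset.sum_neg_distrib]
  refine HasFDerivAt.fun_sum fun i _ => ?_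
  have hAi : HasFDerivAt (fun θ => (A *ᵥ θ) i)
      ((ContinuousLinearMap.proj i).comp A.mulVecLin.toContinuousLinearMap) θ :=
    ((ContinuousLinearMap.proj i).comp A.mulVecLin.toContinuousLinearMap).hasFDerivAt
  refine (((Real.hasDerivAt_cos _).comp_hasFDerivAt θ hAi).const_mul (c i)).congr_fderiv ?_
  ext v
  simp [smul_smul]

theorem fderiv_sum_mul_cos_mulVec_apply (c : m → ℝ) (A : Matrix m n ℝ) (θ v : n → ℝ) :
    fderiv ℝ (fun θ => ∑ i, c i * Real.cos ((A *ᵥ θ) i)) θ v =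
      -((fun i => c i * Real.sin ((A *ᵥ θ) i)) ᵥ* A ⬝ᵥ v) := by
  rw [(hasFDerivAt_sum_mul_cos_mulVec c A θ).fderiv, ← dotProduct_mulVec]
  simp [dotProduct]

/-- Gradient flow formulation: the simplicial order parameter potential `F` is
differentiable everywhere and its differential is
`v ↦ −∑ₗ vₗ·(1/wₗ)·(B₋·sin(M·θ) + P·sin(B₊·θ))ₗ`. -/
theorem kuramoto_gradient_flow (p n q : ℕ)
    (wm : Fin p → ℝ) (w : Fin n → ℝ) (wp : Fin q → ℝ)
    (hwm : ∀ i, 0 < wm i) (hw : ∀ l, 0 < w l) (hwp : ∀ j, 0 < wp j)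
    (Bm : Matrix (Fin n) (Fin p) ℝ) (Bp : Matrix (Fin q) (Fin n) ℝ) :
    let M : Matrix (Fin p) (Fin n) ℝ := Matrix.diagonal wm * Bmᵀ * (Matrix.diagonal w)⁻¹
    let P : Matrix (Fin n) (Fin q) ℝ := Matrix.diagonal w * Bpᵀ * (Matrix.diagonal wp)⁻¹
    let F : (Fin n → ℝ) → ℝ := fun θ =>
      ∑ i, (1 / wm i) * Real.cos ((M *ᵥ θ) i) + ∑ j, (1 / wp j) * Real.cos ((Bp *ᵥ θ) j)
    ∀ θ : Fin n → ℝ,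
      DifferentiableAt ℝ F θ ∧
      ∀ v : Fin n → ℝ, fderiv ℝ F θ v =
        -∑ l, v l * (1 / w l) *
          ((Bm *ᵥ (fun i => Real.sin ((M *ᵥ θ) i)) +
            P *ᵥ (fun j => Real.sin ((Bp *ᵥ θ) j))) l) := by
  intro M P F θ
  have hwm₀ i := (hwm i).ne'
  have hw₀ l := (hw l).ne'
  have hwp₀ j := (hwp j).ne'
  have hM := hasFDerivAt_sum_mul_cos_mulVec (fun i => 1 / wm i) M θ
  have hBp := hasFDerivAt_sum_mul_cos_mulVec (fun j => 1 / wp j) Bp θ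
  refine ⟨(hM.add hBp).differentiableAt, fun v => ?_⟩
  rw [show F = fun θ => _ + _ from rfl, fderiv_fun_add hM.differentiableAt hBp.differentiableAt,
    _root_.add_apply, fderiv_sum_mul_cos_mulVec_apply, fderiv_sum_mul_cos_mulVec_apply,
    vecMul_weightedAdjoint Bm hwm₀ hw₀, weightedAdjoint_mulVec Bp hw₀ hwp₀]
  simp only [dotProduct, Pi.add_apply, ← Finset.sum_add_distrib, ← Finset.sum_neg_distrib]
  exact Finset.sum_congr rfl fun l _ => by ring
end

section
/- (Rotating frame with harmonic natural frequencies.) Let A be a real n × p matrix and B a real q × n matrix, and let h ∈ ℝⁿ satisfy Aᵀ·h = 0 and B·h = 0 (h is harmonic). If θ : ℝ → ℝⁿ satisfies, for every t, the simplicial Kuramoto equation θ'(t) = −A·sin(Aᵀ·θ(t)) − Bᵀ·sin(B·θ(t)), then φ(t) := θ(t) − t·h satisfies, for every t, the equation with harmonic linear frustration φ'(t) = −h − A·sin(Aᵀ·φ(t)) − Bᵀ·sin(B·φ(t)). -/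
open Matrix

/-! Harmonic `h` lies in the kernels of `Aᵀ` and `B`, so shifting `θ` by a multiple of `h` leaves
the coupling terms unchanged; the shift `t • h` only contributes `-h` to the derivative. -/

theorem Matrix.mulVec_sub_smul_of_mulVec_eq_zero {m n R : Type*} [Fintype n] [CommRing R]
    (M : Matrix m n R) {h : n → R} (hM : M *ᵥ h = 0) (x : n → R) (c : R) :
    M *ᵥ (x - c • h) = M *ᵥ x := by
  rw [mulVec_sub, mulVec_smul, hM, smul_zero, sub_zero]

theorem HasDerivAt.sub_smul_id {E : Type*} [NormedAddCommGroup E] [NormedSpace ℝ E]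
    {θ : ℝ → E} {v : E} {t : ℝ} (hθ : HasDerivAt θ v t) (h : E) :
    HasDerivAt (fun s => θ s - s • h) (v - h) t :=
  (hθ.sub ((hasDerivAt_id' t).smul_const h)).congr_deriv (by rw [one_smul])

/-- Rotating frame with harmonic natural frequencies: if `θ` solves the simplicial Kuramoto
equation and `h` is harmonic, then `φ(t) = θ(t) − t·h` solves the equation with harmonic
linear frustration `h`. -/
theorem rotating_frame_harmonic (n p q : ℕ)
    (A : Matrix (Fin n) (Fin p) ℝ) (B : Matrix (Fin q) (Fin n) ℝ)
    (h : Fin n → ℝ) (hAh : Aᵀ *ᵥ h = 0) (hBh : B *ᵥ h = 0)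
    (θ : ℝ → (Fin n → ℝ))
    (hθ : ∀ t : ℝ, HasDerivAt θ
      (-(A *ᵥ fun i => Real.sin ((Aᵀ *ᵥ θ t) i)) -
        Bᵀ *ᵥ fun j => Real.sin ((B *ᵥ θ t) j)) t) :
    ∀ t : ℝ, HasDerivAt (fun s => θ s - s • h)
      (-h - (A *ᵥ fun i => Real.sin ((Aᵀ *ᵥ (θ t - t • h)) i)) -
        Bᵀ *ᵥ fun j => Real.sin ((B *ᵥ (θ t - t • h)) j)) t := by
  intro t
  rw [Aᵀ.mulVec_sub_smul_of_mulVec_eq_zero hAh, B.mulVec_sub_smul_of_mulVec_eq_zero hBh]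
  exact ((hθ t).sub_smul_id h).congr_deriv (by abel)
end

section
/- (Harmonic full synchronization.) Let A be a real n × p matrix and B a real q × n matrix, and let h, θ₀ ∈ ℝⁿ satisfy Aᵀ·h = 0, B·h = 0, Aᵀ·θ₀ = 0 and B·θ₀ = 0. Then the curve θ(t) := θ₀ − t·h satisfies, for every t, the frustrated simplicial Kuramoto equation with harmonic linear frustration h and zero nonlinear frustration, θ'(t) = −h − A·sin(Aᵀ·θ(t)) − Bᵀ·sin(B·θ(t)), and moreover Aᵀ·θ(t) = 0 and B·θ(t) = 0 for all t; hence the trajectory stays in the harmonic space and is fully synchronized (simplicial phase locking with order parameter equal to 1). -/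
open Matrix

/-- Harmonic full synchronization: for harmonic `h` and harmonic initial condition `θ₀`,
the curve `θ(t) = θ₀ − t·h` solves the frustrated simplicial Kuramoto equation with harmonic
linear frustration `h` and zero nonlinear frustration, and stays in the harmonic space. -/
theorem harmonic_full_synchronization (n p q : ℕ)
    (A : Matrix (Fin n) (Fin p) ℝ) (B : Matrix (Fin q) (Fin n) ℝ)
    (h θ₀ : Fin n → ℝ)
    (hAh : Aᵀ *ᵥ h = 0) (hBh : B *ᵥ h = 0)
    (hAθ : Aᵀ *ᵥ θ₀ = 0) (hBθ : B *ᵥ θ₀ = 0) :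
    ∀ t : ℝ,
      HasDerivAt (fun s : ℝ => θ₀ - s • h)
        (-h - (A *ᵥ fun i => Real.sin ((Aᵀ *ᵥ (θ₀ - t • h)) i)) -
          Bᵀ *ᵥ fun j => Real.sin ((B *ᵥ (θ₀ - t • h)) j)) t ∧
      Aᵀ *ᵥ (θ₀ - t • h) = 0 ∧ B *ᵥ (θ₀ - t • h) = 0 := by
  intro t
  have hA : Aᵀ *ᵥ (θ₀ - t • h) = 0 := by
    rw [Matrix.mulVec_sub, Matrix.mulVec_smul, hAh, hAθ, smul_zero, sub_zero]
  have hB : B *ᵥ (θ₀ - t • h) = 0 := by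
    rw [Matrix.mulVec_sub, Matrix.mulVec_smul, hBh, hBθ, smul_zero, sub_zero]
  refine ⟨?_, hA, hB⟩
  have hsin : (fun i => Real.sin ((Aᵀ *ᵥ (θ₀ - t • h)) i)) = (0 : Fin p → ℝ) := by
    funext i; rw [hA]; simp
  have hsin' : (fun j => Real.sin ((B *ᵥ (θ₀ - t • h)) j)) = (0 : Fin q → ℝ) := by
    funext j; rw [hB]; simp
  rw [hsin, hsin', Matrix.mulVec_zero, Matrix.mulVec_zero, sub_zero, sub_zero]
  have : HasDerivAt (fun s : ℝ => θ₀ - s • h) ((0 : Fin n → ℝ) - (1 : ℝ) • h) t := by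
    exact (hasDerivAt_const t θ₀).sub ((hasDerivAt_id t).smul_const h)
  simpa using this
end

section
/- (Decoupling of the unfrustrated dynamics along the Hodge decomposition.) Let A be a real n × p matrix and B a real q × n matrix with B·A = 0. In Euclidean ℝⁿ, let P_g, P_c and P_h be the orthogonal projections onto, respectively, the range of x ↦ A·x, the range of x ↦ Bᵀ·x, and the kernel of x ↦ (A·Aᵀ + Bᵀ·B)·x. Define the simplicial Kuramoto vector field K(θ) := −A·sin(Aᵀ·θ) − Bᵀ·sin(B·θ). Then for every θ ∈ ℝⁿ: P_g(K(θ)) = −A·sin(Aᵀ·(P_g θ)), P_c(K(θ)) = −Bᵀ·sin(B·(P_c θ)), and P_h(K(θ)) = 0. Hence without frustration the gradient, curl and harmonic projections of the dynamics evolve independently. -/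
open Matrix

/-!
Because `B * A = 0`, the ranges of `A` and `Bᵀ` are orthogonal, and the kernel of the Hodge
Laplacian `A * Aᵀ + Bᵀ * B` is `ker Aᵀ ∩ ker B`, which is orthogonal to both ranges. The two terms
of `K θ` lie in the ranges of `A` and `Bᵀ`, so each projection keeps exactly one of them (the
harmonic one neither). Finally `Aᵀ *ᵥ θ = Aᵀ *ᵥ P_g θ`, since `θ - P_g θ` lies in
`(range A)ᗮ = ker Aᵀ`, and likewise `B *ᵥ θ = B *ᵥ P_c θ`.
-/
namespace Matrix

variable {m n k : Type*} [Fintype m] [Fintype n] [Fintype k]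

theorem inner_toLp_mulVec_left (M : Matrix n m ℝ) (y : m → ℝ) (x : EuclideanSpace ℝ n) :
    inner ℝ (WithLp.toLp 2 (M *ᵥ y)) x = (Mᵀ *ᵥ x) ⬝ᵥ y := by
  rw [EuclideanSpace.inner_eq_star_dotProduct, star_trivial, dotProduct_mulVec, ← mulVec_transpose,
    dotProduct_comm]

theorem isOrtho_of_mulVec_transpose_eq_zero {U V : Submodule ℝ (EuclideanSpace ℝ n)}
    (M : Matrix n m ℝ) (hU : ∀ u ∈ U, ∃ y, M *ᵥ y = u) (hV : ∀ v ∈ V, Mᵀ *ᵥ v = 0) : U ⟂ V := by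
  refine Submodule.isOrtho_iff_inner_eq.2 fun u hu v hv => ?_
  obtain ⟨y, hy⟩ := hU u hu
  rw [← u.toLp_ofLp, ← hy, inner_toLp_mulVec_left, hV v hv, zero_dotProduct]

theorem mulVec_transpose_eq_zero_of_mem_orthogonal {U : Submodule ℝ (EuclideanSpace ℝ n)}
    {M : Matrix n m ℝ} (hU : ∀ y, WithLp.toLp 2 (M *ᵥ y) ∈ U) {x : EuclideanSpace ℝ n}
    (hx : x ∈ Uᗮ) : Mᵀ *ᵥ x = 0 :=
  dotProduct_eq_zero _ fun y => by
    rw [← inner_toLp_mulVec_left, Submodule.inner_right_of_mem_orthogonal (hU y) hx]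

theorem mulVec_transpose_starProjection {U : Submodule ℝ (EuclideanSpace ℝ n)}
    {M : Matrix n m ℝ} (hU : ∀ y, WithLp.toLp 2 (M *ᵥ y) ∈ U) (x : EuclideanSpace ℝ n) :
    Mᵀ *ᵥ U.starProjection x = Mᵀ *ᵥ x := by
  have := mulVec_transpose_eq_zero_of_mem_orthogonal hU (U.sub_starProjection_mem_orthogonal x)
  rwa [WithLp.ofLp_sub, mulVec_sub, sub_eq_zero, eq_comm] at this

theorem mulVec_eq_zero_of_mul_transpose_add_transpose_mul_mulVec_eq_zero
    {M : Matrix n m ℝ} {N : Matrix k n ℝ} {x : n → ℝ} (hx : (M * Mᵀ + Nᵀ * N) *ᵥ x = 0) :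
    Mᵀ *ᵥ x = 0 ∧ N *ᵥ x = 0 := by
  have hsum : (Mᵀ *ᵥ x) ⬝ᵥ (Mᵀ *ᵥ x) + (N *ᵥ x) ⬝ᵥ (N *ᵥ x) = 0 := by
    rw [← dotProduct_zero x, ← hx, add_mulVec, dotProduct_add, ← mulVec_mulVec, ← mulVec_mulVec,
      dotProduct_transpose_mulVec N, ← dotProduct_transpose_mulVec Mᵀ, transpose_transpose]
  obtain ⟨hM, hN⟩ := (add_eq_zero_iff_of_nonneg (Fintype.sum_nonneg fun _ => mul_self_nonneg _)
    (Fintype.sum_nonneg fun _ => mul_self_nonneg _)).1 hsum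
  exact ⟨dotProduct_self_eq_zero.1 hM, dotProduct_self_eq_zero.1 hN⟩

end Matrix

namespace Submodule

variable {𝕜 E : Type*} [RCLike 𝕜] [NormedAddCommGroup E] [InnerProductSpace 𝕜 E]

theorem IsOrtho.starProjection_add {U V : Submodule 𝕜 E} [U.HasOrthogonalProjection] (h : U ⟂ V)
    {u v : E} (hu : u ∈ U) (hv : v ∈ V) : U.starProjection (u + v) = u :=
  eq_starProjection_of_mem_orthogonal' hu (h.symm.le hv) rfl

end Submodule

/-- Decoupling of the unfrustrated simplicial Kuramoto dynamics along the Hodge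
decomposition: the gradient, curl and harmonic projections of the vector field only depend
on the corresponding projections of the phase, and the harmonic projection vanishes. -/
theorem unfrustrated_hodge_decoupling (n p q : ℕ)
    (A : Matrix (Fin n) (Fin p) ℝ) (B : Matrix (Fin q) (Fin n) ℝ)
    (hBA : B * A = 0)
    (G C H : Submodule ℝ (EuclideanSpace ℝ (Fin n)))
    (hG : ∀ x : EuclideanSpace ℝ (Fin n), x ∈ G ↔ ∃ y : Fin p → ℝ, A *ᵥ y = x)
    (hC : ∀ x : EuclideanSpace ℝ (Fin n), x ∈ C ↔ ∃ z : Fin q → ℝ, Bᵀ *ᵥ z = x)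
    (hH : ∀ x : EuclideanSpace ℝ (Fin n), x ∈ H ↔ (A * Aᵀ + Bᵀ * B) *ᵥ x = 0) :
    let K : EuclideanSpace ℝ (Fin n) → EuclideanSpace ℝ (Fin n) := fun θ =>
      WithLp.toLp 2 (-(A *ᵥ fun i => Real.sin ((Aᵀ *ᵥ θ) i)) - Bᵀ *ᵥ fun j => Real.sin ((B *ᵥ θ) j))
    ∀ θ : EuclideanSpace ℝ (Fin n),
      (Submodule.orthogonalProjectionOnto G (K θ) : EuclideanSpace ℝ (Fin n)) =
        -(A *ᵥ fun i =>
          Real.sin ((Aᵀ *ᵥ (Submodule.orthogonalProjectionOnto G θ : EuclideanSpace ℝ (Fin n))) i)) ∧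
      (Submodule.orthogonalProjectionOnto C (K θ) : EuclideanSpace ℝ (Fin n)) =
        -(Bᵀ *ᵥ fun j =>
          Real.sin ((B *ᵥ (Submodule.orthogonalProjectionOnto C θ : EuclideanSpace ℝ (Fin n))) j)) ∧
      (Submodule.orthogonalProjectionOnto H (K θ) : EuclideanSpace ℝ (Fin n)) = 0 := by
  intro K θ
  have hAG (y : Fin p → ℝ) : WithLp.toLp 2 (A *ᵥ y) ∈ G := (hG _).2 ⟨y, rfl⟩
  have hBC (z : Fin q → ℝ) : WithLp.toLp 2 (Bᵀ *ᵥ z) ∈ C := (hC _).2 ⟨z, rfl⟩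
  have hH_ker (x : EuclideanSpace ℝ (Fin n)) (hx : x ∈ H) : Aᵀ *ᵥ x = 0 ∧ B *ᵥ x = 0 :=
    mulVec_eq_zero_of_mul_transpose_add_transpose_mul_mulVec_eq_zero ((hH x).1 hx)
  have hGC : G ⟂ C := isOrtho_of_mulVec_transpose_eq_zero A (fun u hu => (hG u).1 hu) fun v hv => by
    obtain ⟨z, hz⟩ := (hC v).1 hv
    rw [← hz, mulVec_mulVec, ← transpose_mul, hBA, transpose_zero, zero_mulVec]
  have hGH : G ⟂ H := isOrtho_of_mulVec_transpose_eq_zero A (fun u hu => (hG u).1 hu)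
    fun v hv => (hH_ker v hv).1
  have hCH : C ⟂ H := isOrtho_of_mulVec_transpose_eq_zero Bᵀ (fun u hu => (hC u).1 hu)
    fun v hv => by rw [transpose_transpose]; exact (hH_ker v hv).2
  have hK : K θ = -WithLp.toLp 2 (A *ᵥ fun i => Real.sin ((Aᵀ *ᵥ θ) i)) +
      -WithLp.toLp 2 (Bᵀ *ᵥ fun j => Real.sin ((B *ᵥ θ) j)) := by
    simp only [K, sub_eq_add_neg, WithLp.toLp_add, WithLp.toLp_neg]
  simp only [Submodule.coe_orthogonalProjectionOnto_apply]
  refine ⟨?_, ?_, ?_⟩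
  · rw [hK, hGC.starProjection_add (G.neg_mem (hAG _)) (C.neg_mem (hBC _)),
      mulVec_transpose_starProjection hAG]
    rfl
  · rw [hK, add_comm, hGC.symm.starProjection_add (C.neg_mem (hBC _)) (G.neg_mem (hAG _))]
    have hBθ : B *ᵥ C.starProjection θ = B *ᵥ θ := by
      simpa only [transpose_transpose] using mulVec_transpose_starProjection hBC θ
    rw [hBθ]
    rfl
  · refine H.starProjection_apply_eq_zero_iff.2 (hK ▸ add_mem ?_ ?_)
    · exact hGH.le (G.neg_mem (hAG _))
    · exact hCH.le (C.neg_mem (hBC _))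
end
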